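/- arXiv:1811.05500 — 4 statements merged into one kernel-verified Lean document; each statement's English description precedes it below -/
import Mathlib

section
/- If X_j is obtained from X_{j−1} by one ADI step, i.e., X_j = C(A,α)X_{j−1}C(A,α)* − 2Re(α)(A+αI)⁻¹BB*(A+αI)⁻*, then the residual R(X) := AX + XA* + BB* satisfies R(X_j) = C(A,α) R(X_{j−1}) C(A,α)*. -/
open Matrix

/-!
Write `M = A + αI` and `N = A - ᾱI`, so that `C(A,α) = N M⁻¹` commutes with `A`, and let
`L X = A X + X A*`. Since `A` commutes with `C`, `L (C X C*) = C (L X) C*`. Expanding shows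
`M Q M* - N Q N* = 2 Re(α) L Q` for every `Q`; applied to `Q = M⁻¹ B B* M⁻*`, for which
`M Q M* = B B*` and `N Q N* = C B B* C*`, this turns the `B B*` term of the residual into
exactly the correction term of the ADI step.
-/

noncomputable def Cayley {n : ℕ} (A : Matrix (Fin n) (Fin n) ℂ) (α : ℂ) :
    Matrix (Fin n) (Fin n) ℂ :=
  (A - (starRingEnd ℂ α) • 1) * (A + α • 1)⁻¹

section Lyapunov

variable (𝕜 : Type*) {R : Type*} [CommSemiring 𝕜] [Semiring R] [StarMul R] [Algebra 𝕜 R]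

def lyapunov (a : R) : R →ₗ[𝕜] R :=
  LinearMap.mulLeft 𝕜 a + LinearMap.mulRight 𝕜 (star a)

theorem lyapunov_apply (a x : R) : lyapunov 𝕜 a x = a * x + x * star a := rfl

variable {𝕜} in
theorem lyapunov_mul_mul_star_of_commute {a c : R} (h : Commute a c) (x : R) :
    lyapunov 𝕜 a (c * x * star c) = c * lyapunov 𝕜 a x * star c := by
  simp only [lyapunov_apply, mul_add, add_mul, ← mul_assoc, h.eq]
  simp only [mul_assoc, h.star_star.eq]

end Lyapunov

section StarAlgebra

variable {R : Type*} [Ring R] [StarRing R] [Algebra ℂ R] [StarModule ℂ R]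

theorem shift_mul_mul_star_sub_shift_mul_mul_star (a p : R) (α : ℂ) :
    (a + α • 1) * p * star (a + α • 1)
        - (a - starRingEnd ℂ α • 1) * p * star (a - starRingEnd ℂ α • 1)
      = ((2 * α.re : ℝ) : ℂ) • lyapunov ℂ a p := by
  have hre : ((2 * α.re : ℝ) : ℂ) = α + starRingEnd ℂ α := (Complex.add_conj α).symm
  simp only [lyapunov_apply, hre, star_add, star_sub, star_smul, star_one, Complex.star_def,
    Complex.conj_conj, mul_add, add_mul, mul_sub, sub_mul, smul_mul_assoc, mul_smul_comm,
    mul_one, one_mul]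
  module

theorem lyapunov_residual_adi_step {a c : R} {α : ℂ} (hac : Commute a c)
    (hc : c * (a + α • 1) = a - starRingEnd ℂ α • 1) (x q : R) :
    lyapunov ℂ a (c * x * star c - ((2 * α.re : ℝ) : ℂ) • q)
        + (a + α • 1) * q * star (a + α • 1)
      = c * (lyapunov ℂ a x + (a + α • 1) * q * star (a + α • 1)) * star c := by
  have hshift := shift_mul_mul_star_sub_shift_mul_mul_star a q α
  have hconj : c * ((a + α • 1) * q * star (a + α • 1)) * star c
      = (a - starRingEnd ℂ α • 1) * q * star (a - starRingEnd ℂ α • 1) := by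
    rw [← hc, star_mul]; simp only [mul_assoc]
  rw [mul_add c, add_mul _ _ (star c), hconj, map_sub, map_smul,
    lyapunov_mul_mul_star_of_commute hac, ← hshift]
  abel

end StarAlgebra

section CayleyTransform

variable {n : ℕ} {A : Matrix (Fin n) (Fin n) ℂ} {α : ℂ}

theorem Cayley_mul_shift (hinv : IsUnit (A + α • 1)) :
    Cayley A α * (A + α • 1) = A - starRingEnd ℂ α • 1 :=
  nonsing_inv_mul_cancel_right _ _ ((isUnit_iff_isUnit_det _).mp hinv)

theorem commute_Cayley (hinv : IsUnit (A + α • 1)) : Commute A (Cayley A α) := by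
  have hM : Commute A hinv.unit := (Commute.refl A).add_right ((Commute.one_right A).smul_right α)
  refine ((Commute.refl A).sub_right ((Commute.one_right A).smul_right _)).mul_right ?_
  simpa only [hinv.unit_spec, coe_units_inv] using hM.units_inv_right

end CayleyTransform

theorem mul_nonsing_inv_mul_conjTranspose_cancel {m 𝕜 : Type*} [Fintype m] [DecidableEq m]
    [CommRing 𝕜] [StarRing 𝕜] {M : Matrix m m 𝕜} (hM : IsUnit M) (P : Matrix m m 𝕜) :
    M * (M⁻¹ * P * M⁻¹ᴴ) * Mᴴ = P := by
  have hdet := (isUnit_iff_isUnit_det M).mp hM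
  simp only [← Matrix.mul_assoc, mul_nonsing_inv _ hdet, Matrix.one_mul]
  rw [Matrix.mul_assoc, ← conjTranspose_mul, mul_nonsing_inv _ hdet, conjTranspose_one,
    Matrix.mul_one]

theorem adi_step_residual_general {n s : ℕ} (A : Matrix (Fin n) (Fin n) ℂ)
    (B : Matrix (Fin n) (Fin s) ℂ) (Xprev : Matrix (Fin n) (Fin n) ℂ) (α : ℂ)
    (hinv : IsUnit (A + α • (1 : Matrix (Fin n) (Fin n) ℂ)))
    (R : Matrix (Fin n) (Fin n) ℂ → Matrix (Fin n) (Fin n) ℂ)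
    (hR : ∀ X, R X = A * X + X * Aᴴ + B * Bᴴ)
    (Xnext : Matrix (Fin n) (Fin n) ℂ)
    (hstep : Xnext = Cayley A α * Xprev * (Cayley A α)ᴴ
      - ((2 * α.re : ℝ) : ℂ) • ((A + α • 1)⁻¹ * B * Bᴴ * ((A + α • 1)⁻¹)ᴴ)) :
    R Xnext = Cayley A α * R Xprev * (Cayley A α)ᴴ := by
  have hBB : B * Bᴴ
      = (A + α • 1) * ((A + α • 1)⁻¹ * (B * Bᴴ) * ((A + α • 1)⁻¹)ᴴ) * (A + α • 1)ᴴ :=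
    (mul_nonsing_inv_mul_conjTranspose_cancel hinv _).symm
  rw [hR, hR, hstep, hBB, Matrix.mul_assoc (A + α • 1)⁻¹ B Bᴴ]
  exact lyapunov_residual_adi_step (commute_Cayley hinv) (Cayley_mul_shift hinv) _ _

theorem adi_step_residual {n s : ℕ} (A : Matrix (Fin n) (Fin n) ℂ)
    (B : Matrix (Fin n) (Fin s) ℂ) (Xprev : Matrix (Fin n) (Fin n) ℂ) (α : ℂ)
    (hα : α.re < 0) (hinv : IsUnit (A + α • (1 : Matrix (Fin n) (Fin n) ℂ)))
    (hHerm : Xprev.IsHermitian)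
    (R : Matrix (Fin n) (Fin n) ℂ → Matrix (Fin n) (Fin n) ℂ)
    (hR : ∀ X, R X = A * X + X * Aᴴ + B * Bᴴ)
    (Xnext : Matrix (Fin n) (Fin n) ℂ)
    (hstep : Xnext = Cayley A α * Xprev * (Cayley A α)ᴴ
      - ((2 * α.re : ℝ) : ℂ) • ((A + α • 1)⁻¹ * B * Bᴴ * ((A + α • 1)⁻¹)ᴴ)) :
    R Xnext = Cayley A α * R Xprev * (Cayley A α)ᴴ :=
  adi_step_residual_general A B Xprev α hinv R hR Xnext hstep
end

section
/- After j steps of the ADI iteration starting from X₀, the residual satisfies R(X_j) = M_j R(X₀) M_j*, where M_j = ∏_{i=1}^{j} C(A, α_i). -/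
open Matrix

/-!
The Cayley transform `C = (A - ᾱ I)(A + α I)⁻¹` is a rational function of `A`, so it commutes
with `A` and with every other Cayley transform of `A`. With `S = A + α I` the numerator is
`S - 2 Re α I`, whence `C Q Cᴴ = Q - 2 Re α (A N + N Aᴴ)` for `N = S⁻¹ Q S⁻ᴴ`. The correction term
of the ADI step is exactly this `N` for `Q = B Bᴴ`, so one step conjugates the residual by `C`;
iterating and commuting the factors gives the product formula.
-/

theorem Commute.nonsing_inv_left {m K : Type*} [Fintype m] [DecidableEq m] [CommRing K]
    {M N : Matrix m m K} (h : Commute M N) : Commute M⁻¹ N := by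
  by_cases hM : IsUnit M
  · obtain ⟨u, rfl⟩ := hM
    rw [← coe_units_inv]
    exact h.units_inv_left
  · rw [nonsing_inv_apply_not_isUnit M ((isUnit_iff_isUnit_det M).not.mp hM)]
    exact Commute.zero_left N

section Cayley

variable {n : ℕ} {A : Matrix (Fin n) (Fin n) ℂ}

theorem Commute.cayley_left {M : Matrix (Fin n) (Fin n) ℂ} (h : Commute A M) (α : ℂ) :
    Commute (Cayley A α) M :=
  (h.sub_left ((Commute.one_left M).smul_left _)).mul_left
    ((h.add_left ((Commute.one_left M).smul_left _)).nonsing_inv_left)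

theorem commute_self_cayley (A : Matrix (Fin n) (Fin n) ℂ) (α : ℂ) : Commute A (Cayley A α) :=
  ((Commute.refl A).cayley_left α).symm

theorem commute_cayley_cayley (A : Matrix (Fin n) (Fin n) ℂ) (α β : ℂ) :
    Commute (Cayley A α) (Cayley A β) :=
  (commute_self_cayley A β).cayley_left α

theorem sub_conj_smul_one_mul_mul_conjTranspose (A N : Matrix (Fin n) (Fin n) ℂ) (α : ℂ) :
    (A - starRingEnd ℂ α • 1) * N * (A - starRingEnd ℂ α • 1)ᴴ
      = (A + α • 1) * N * (A + α • 1)ᴴ - ((2 * α.re : ℝ) : ℂ) • (A * N + N * Aᴴ) := by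
  rw [← Complex.add_conj]
  simp only [conjTranspose_sub, conjTranspose_add, conjTranspose_smul, conjTranspose_one,
    Complex.star_def, Complex.conj_conj, sub_mul, mul_sub, add_mul, mul_add, smul_mul_assoc,
    mul_smul_comm, smul_smul, one_mul, mul_one, smul_add]
  module

theorem cayley_mul_mul_conjTranspose (α : ℂ) (hα : IsUnit (A + α • 1))
    (Q : Matrix (Fin n) (Fin n) ℂ) :
    Cayley A α * Q * (Cayley A α)ᴴ
      = Q - ((2 * α.re : ℝ) : ℂ) •
          (A * ((A + α • 1)⁻¹ * Q * ((A + α • 1)⁻¹)ᴴ)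
            + (A + α • 1)⁻¹ * Q * ((A + α • 1)⁻¹)ᴴ * Aᴴ) := by
  set S := A + α • 1
  set N := S⁻¹ * Q * S⁻¹ᴴ
  have hSS : S * S⁻¹ = 1 := mul_nonsing_inv S ((isUnit_iff_isUnit_det S).mp hα)
  have hSNS : S * N * Sᴴ = Q := by
    calc S * N * Sᴴ = (S * S⁻¹) * Q * (S * S⁻¹)ᴴ := by
          simp only [N, conjTranspose_mul, Matrix.mul_assoc]
      _ = Q := by rw [hSS, conjTranspose_one, Matrix.one_mul, Matrix.mul_one]
  calc Cayley A α * Q * (Cayley A α)ᴴ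
      = (A - starRingEnd ℂ α • 1) * N * (A - starRingEnd ℂ α • 1)ᴴ := by
        simp only [Cayley, N, S, conjTranspose_mul, Matrix.mul_assoc]
    _ = Q - ((2 * α.re : ℝ) : ℂ) • (A * N + N * Aᴴ) := by
        rw [sub_conj_smul_one_mul_mul_conjTranspose, hSNS]

theorem cayley_adi_step_residual (α : ℂ) (hα : IsUnit (A + α • 1))
    (Q X Y : Matrix (Fin n) (Fin n) ℂ)
    (hY : Y = Cayley A α * X * (Cayley A α)ᴴ
      - ((2 * α.re : ℝ) : ℂ) • ((A + α • 1)⁻¹ * Q * ((A + α • 1)⁻¹)ᴴ)) :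
    A * Y + Y * Aᴴ + Q = Cayley A α * (A * X + X * Aᴴ + Q) * (Cayley A α)ᴴ := by
  have hAC : Commute A (Cayley A α) := commute_self_cayley A α
  have hAC' : Commute Aᴴ (Cayley A α)ᴴ := hAC.star_star
  have hQ := cayley_mul_mul_conjTranspose α hα Q
  set C := Cayley A α
  set N := (A + α • 1)⁻¹ * Q * ((A + α • 1)⁻¹)ᴴ
  have hA : A * (C * X * Cᴴ) = C * (A * X) * Cᴴ := by
    rw [← Matrix.mul_assoc, ← Matrix.mul_assoc, hAC.eq, Matrix.mul_assoc C]
  have hAH : C * X * Cᴴ * Aᴴ = C * (X * Aᴴ) * Cᴴ := by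
    rw [Matrix.mul_assoc, ← hAC'.eq, ← Matrix.mul_assoc, Matrix.mul_assoc C]
  rw [hY, Matrix.mul_add, Matrix.add_mul, hQ, mul_sub, sub_mul, hA, hAH, mul_smul_comm,
    smul_mul_assoc, Matrix.mul_add, Matrix.add_mul]
  module

end Cayley

theorem conj_iterate_eq_list_prod {M : Type*} [Monoid M] [StarMul M] {j : ℕ} (C : Fin j → M)
    (hC : ∀ i k, Commute (C i) (C k)) (f : ℕ → M)
    (hf : ∀ i : Fin j, f (i + 1) = C i * f i * star (C i)) :
    f j = (List.ofFn C).prod * f 0 * star (List.ofFn C).prod := by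
  induction j with
  | zero => simp
  | succ j ih =>
    have hprefix := ih (fun i => C i.castSucc) (fun i k => hC _ _) fun i => hf i.castSucc
    set P := (List.ofFn fun i => C (Fin.castSucc i)).prod
    have hcomm : Commute (C (Fin.last j)) P :=
      Commute.list_prod_right _ _ fun x hx => by
        obtain ⟨i, rfl⟩ := List.mem_ofFn.mp hx
        exact hC _ _
    calc f (j + 1) = C (Fin.last j) * f j * star (C (Fin.last j)) := hf (Fin.last j)
      _ = (C (Fin.last j) * P) * f 0 * star (C (Fin.last j) * P) := by
          rw [hprefix, star_mul]; simp only [mul_assoc]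
      _ = (List.ofFn C).prod * f 0 * star (List.ofFn C).prod := by
          rw [hcomm.eq, List.ofFn_succ', List.prod_concat]

theorem adi_residual_product_general {n s j : ℕ} (A : Matrix (Fin n) (Fin n) ℂ)
    (B : Matrix (Fin n) (Fin s) ℂ) (α : Fin j → ℂ)
    (hinv : ∀ i, IsUnit (A + α i • (1 : Matrix (Fin n) (Fin n) ℂ)))
    (R : Matrix (Fin n) (Fin n) ℂ → Matrix (Fin n) (Fin n) ℂ)
    (hR : ∀ X, R X = A * X + X * Aᴴ + B * Bᴴ)
    (X : ℕ → Matrix (Fin n) (Fin n) ℂ)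
    (hstep : ∀ i : Fin j,
      X (i + 1) = Cayley A (α i) * X i * (Cayley A (α i))ᴴ
        - ((2 * (α i).re : ℝ) : ℂ) •
          ((A + α i • 1)⁻¹ * B * Bᴴ * ((A + α i • 1)⁻¹)ᴴ)) :
    R (X j) = (List.ofFn fun i : Fin j => Cayley A (α i)).prod * R (X 0)
      * ((List.ofFn fun i : Fin j => Cayley A (α i)).prod)ᴴ := by
  have hres : ∀ i : Fin j,
      R (X (i + 1)) = Cayley A (α i) * R (X i) * (Cayley A (α i))ᴴ := fun i => by
    rw [hR, hR]
    exact cayley_adi_step_residual (α i) (hinv i) (B * Bᴴ) (X i) (X (i + 1))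
      ((hstep i).trans (by simp only [Matrix.mul_assoc]))
  exact conj_iterate_eq_list_prod (fun i => Cayley A (α i))
    (fun i k => commute_cayley_cayley A _ _) (R ∘ X) hres

theorem adi_residual_product {n s j : ℕ} (A : Matrix (Fin n) (Fin n) ℂ)
    (B : Matrix (Fin n) (Fin s) ℂ) (α : Fin j → ℂ)
    (hα : ∀ i, (α i).re < 0)
    (hinv : ∀ i, IsUnit (A + α i • (1 : Matrix (Fin n) (Fin n) ℂ)))
    (R : Matrix (Fin n) (Fin n) ℂ → Matrix (Fin n) (Fin n) ℂ)
    (hR : ∀ X, R X = A * X + X * Aᴴ + B * Bᴴ)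
    (X : ℕ → Matrix (Fin n) (Fin n) ℂ)
    (hHerm : (X 0).IsHermitian)
    (hstep : ∀ i : Fin j,
      X (i + 1) = Cayley A (α i) * X i * (Cayley A (α i))ᴴ
        - ((2 * (α i).re : ℝ) : ℂ) •
          ((A + α i • 1)⁻¹ * B * Bᴴ * ((A + α i • 1)⁻¹)ᴴ)) :
    R (X j) = (List.ofFn fun i : Fin j => Cayley A (α i)).prod * R (X 0)
      * ((List.ofFn fun i : Fin j => Cayley A (α i)).prod)ᴴ :=
  adi_residual_product_general A B α hinv R hR X hstep
end

section
/- Let real shifts α₁,…,α_j < 0 generate LR-ADI data with W_j = B + Z_jG_j and AZ_j = Z_jS_j + BG_j*. Then for every p ≥ 1, A^{p−1}W_j ∈ range(K_p(A,B)) + range(Z_j), i.e., there exist M_p ∈ ℂ^{sp×s} with A^{p−1}W_j = K_p(A,B)M_p + Z_j S_j^{p−1} G_j, where K_p(A,B) = [B, AB, …, A^{p−1}B]. -/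
/-!
Induction on `p`: multiplying `A^p W = Σ_{i ≤ p} A^i B D_i + Z S^p G` by `A` shifts every Krylov
block up by one, while `A Z = Z S + B Gᵀ` turns `A Z S^p G` into `Z S^(p+1) G` plus the new
zeroth block `B (Gᵀ S^p G)`.
-/

open Matrix

namespace Matrix

variable {m ι κ R : Type*} [Fintype m] [DecidableEq m] [Fintype ι] [Semiring R]

def blockKrylov (A : Matrix m m R) (B : Matrix m ι R) (p : ℕ) : Matrix m (Fin p × ι) R :=
  of fun r ic => (A ^ (ic.1 : ℕ) * B) r ic.2

theorem blockKrylov_mul (A : Matrix m m R) (B : Matrix m ι R) {p : ℕ}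
    (M : Matrix (Fin p × ι) κ R) :
    blockKrylov A B p * M = ∑ i : Fin p, A ^ (i : ℕ) * B * of fun c c' => M (i, c) c' := by
  ext r c'
  simp [blockKrylov, mul_apply, sum_apply, Fintype.sum_prod_type, Finset.sum_mul]

theorem exists_pow_mul_eq_sum_pow_mul_add {A : Matrix m m R} {B W : Matrix m ι R}
    {Z : Matrix m κ R} {G : Matrix κ ι R} {S : Matrix κ κ R} {C : Matrix ι κ R}
    [DecidableEq ι] [Fintype κ] [DecidableEq κ]
    (hW : W = B + Z * G) (hAZ : A * Z = Z * S + B * C) (p : ℕ) :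
    ∃ D : Fin (p + 1) → Matrix ι ι R,
      A ^ p * W = ∑ i : Fin (p + 1), A ^ (i : ℕ) * B * D i + Z * S ^ p * G := by
  induction p with
  | zero => exact ⟨fun _ => 1, by simp [hW]⟩
  | succ p ih =>
    obtain ⟨D, hD⟩ := ih
    refine ⟨Fin.cons (C * S ^ p * G) D, ?_⟩
    have hA_sum : A * ∑ i : Fin (p + 1), A ^ (i : ℕ) * B * D i
        = ∑ i : Fin (p + 1), A ^ ((i.succ : Fin (p + 2)) : ℕ) * B * D i := by
      simp only [Matrix.mul_sum, Fin.val_succ, pow_succ', Matrix.mul_assoc]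
    calc A ^ (p + 1) * W = A * (A ^ p * W) := by rw [pow_succ', Matrix.mul_assoc]
      _ = A * ∑ i : Fin (p + 1), A ^ (i : ℕ) * B * D i + A * Z * (S ^ p * G) := by
        rw [hD, Matrix.mul_add]
        simp only [Matrix.mul_assoc]
      _ = ∑ i : Fin (p + 1), A ^ ((i.succ : Fin (p + 2)) : ℕ) * B * D i
            + (Z * S + B * C) * (S ^ p * G) := by
        rw [hA_sum, hAZ]
      _ = A ^ ((0 : Fin (p + 2)) : ℕ) * B * (C * S ^ p * G)
            + ∑ i : Fin (p + 1), A ^ ((i.succ : Fin (p + 2)) : ℕ) * B * D i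
            + Z * S ^ (p + 1) * G := by
        simp only [Fin.val_zero, pow_zero, Matrix.one_mul, Matrix.add_mul, pow_succ',
          Matrix.mul_assoc]
        abel
      _ = _ := by rw [Fin.sum_univ_succ (n := p + 1)]; simp only [Fin.cons_zero, Fin.cons_succ]

end Matrix

theorem krylov_resfactor_decomposition {n s js : ℕ} (A : Matrix (Fin n) (Fin n) ℝ)
    (B : Matrix (Fin n) (Fin s) ℝ) (W : Matrix (Fin n) (Fin s) ℝ)
    (Z : Matrix (Fin n) (Fin js) ℝ) (G : Matrix (Fin js) (Fin s) ℝ)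
    (S : Matrix (Fin js) (Fin js) ℝ)
    (hW : W = B + Z * G) (hAZ : A * Z = Z * S + B * Gᵀ) :
    ∀ p : ℕ, 1 ≤ p →
      ∃ M : Matrix (Fin p × Fin s) (Fin s) ℝ,
        A ^ (p - 1) * W
          = (Matrix.of fun r (ic : Fin p × Fin s) => (A ^ (ic.1 : ℕ) * B) r ic.2) * M
            + Z * S ^ (p - 1) * G := by
  intro p hp
  obtain ⟨q, rfl⟩ : ∃ q, p = q + 1 := ⟨p - 1, by omega⟩
  obtain ⟨D, hD⟩ := exists_pow_mul_eq_sum_pow_mul_add hW hAZ q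
  refine ⟨of fun ic c => D ic.1 ic.2 c, ?_⟩
  rw [← blockKrylov, blockKrylov_mul, Nat.add_sub_cancel]
  exact hD
end

section
/- Inverse Krylov version: if additionally A and S_j are invertible, then A⁻¹W_j = A⁻¹B(I_s − G_j*S_j⁻¹G_j) + Z_jS_j⁻¹, and hence A⁻¹W_j ∈ span{A⁻¹B} + range(Z_j). -/
/-! Multiplying the Sylvester-type relation `A Z = Z S + B Gᵀ` by `A⁻¹` on the left and `S⁻¹`
on the right expresses `A⁻¹ Z` as `Z S⁻¹ - A⁻¹ B Gᵀ S⁻¹`; substituting this into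
`A⁻¹ W = A⁻¹ B + A⁻¹ Z G` and collecting the `A⁻¹ B` terms gives the factorization. -/

open Matrix

namespace Matrix

variable {m k s R : Type*} [Fintype m] [DecidableEq m] [Fintype k] [DecidableEq k] [Fintype s]
  [DecidableEq s] [CommRing R]

theorem inv_mul_eq_mul_inv_sub_of_mul_eq_mul_add {A : Matrix m m R} {S : Matrix k k R}
    {Z C : Matrix m k R} (hA : IsUnit A) (hS : IsUnit S) (h : A * Z = Z * S + C) :
    A⁻¹ * Z = Z * S⁻¹ - A⁻¹ * C * S⁻¹ := by
  have hAd := (isUnit_iff_isUnit_det A).mp hA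
  have hSd := (isUnit_iff_isUnit_det S).mp hS
  rw [eq_sub_iff_add_eq]
  calc A⁻¹ * Z + A⁻¹ * C * S⁻¹ = A⁻¹ * (Z * S + C) * S⁻¹ := by
        rw [Matrix.mul_add, Matrix.add_mul, ← Matrix.mul_assoc, mul_nonsing_inv_cancel_right S _ hSd]
    _ = Z * S⁻¹ := by rw [← h, nonsing_inv_mul_cancel_left A Z hAd]

theorem inv_mul_add_mul_eq_of_mul_eq_mul_add {A : Matrix m m R} {S : Matrix k k R}
    {B : Matrix m s R} {Z : Matrix m k R} {G : Matrix k s R} {H : Matrix s k R}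
    (hA : IsUnit A) (hS : IsUnit S) (h : A * Z = Z * S + B * H) :
    A⁻¹ * (B + Z * G) = A⁻¹ * B * (1 - H * S⁻¹ * G) + Z * S⁻¹ * G := by
  rw [Matrix.mul_add, ← Matrix.mul_assoc, inv_mul_eq_mul_inv_sub_of_mul_eq_mul_add hA hS h]
  simp only [Matrix.mul_sub, Matrix.sub_mul, Matrix.mul_one, Matrix.mul_assoc]
  abel

end Matrix

theorem inverse_krylov_resfactor {n s js : ℕ} (A : Matrix (Fin n) (Fin n) ℝ)
    (B : Matrix (Fin n) (Fin s) ℝ) (W : Matrix (Fin n) (Fin s) ℝ)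
    (Z : Matrix (Fin n) (Fin js) ℝ) (G : Matrix (Fin js) (Fin s) ℝ)
    (S : Matrix (Fin js) (Fin js) ℝ)
    (hA : IsUnit A) (hS : IsUnit S)
    (hW : W = B + Z * G) (hAZ : A * Z = Z * S + B * Gᵀ) :
    A⁻¹ * W = A⁻¹ * B * (1 - Gᵀ * S⁻¹ * G) + Z * S⁻¹ * G ∧
      ∃ (Ξ : Matrix (Fin s) (Fin s) ℝ) (Y : Matrix (Fin js) (Fin s) ℝ),
        A⁻¹ * W = A⁻¹ * B * Ξ + Z * Y := by
  have factor : A⁻¹ * W = A⁻¹ * B * (1 - Gᵀ * S⁻¹ * G) + Z * S⁻¹ * G := by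
    rw [hW]
    exact inv_mul_add_mul_eq_of_mul_eq_mul_add hA hS hAZ
  exact ⟨factor, _, S⁻¹ * G, by rw [factor, Matrix.mul_assoc Z]⟩
end
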